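/- For |q|<1 and w ∉ {0} ∪ {q^ℓ : ℓ ∈ ℤ}, the universal mock theta function g₂(w;q) := ∑_{n≥0} (−q;q)_n q^{n(n+1)/2} / ((w;q)_{n+1} (w^{-1}q;q)_{n+1}) satisfies g₂(w;q) = (1+w)/(2w(1−w)) · O₂(w;q) − 1/(2w), where O₂(w;q) := ∑_{n≥0} (−1;q)_n q^{n(n+1)/2} / ((wq;q)_n (w^{-1}q;q)_n) is the overpartition rank generating function. -/
import Mathlib

open Filter

noncomputable def qPoch (a q : ℂ) (n : ℕ) : ℂ :=
  ∏ j ∈ Finset.range n, (1 - a * q ^ j)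

lemma qPoch_succ (a q : ℂ) (n : ℕ) :
    qPoch a q (n+1) = qPoch a q n * (1 - a * q ^ n) :=
  Finset.prod_range_succ _ _

lemma qPoch_shift (a q : ℂ) (n : ℕ) :
    qPoch a q (n+1) = (1 - a) * qPoch (a*q) q n := by
  unfold qPoch
  rw [Finset.prod_range_succ']
  rw [mul_comm]
  simp only [pow_zero, mul_one]
  congr 1
  refine Finset.prod_congr rfl fun j _ => ?_
  ring

lemma summable_helper {f g : ℕ → ℂ} (hfg : ∀ n, f (n+1) = f n * g n)
    (hg : Filter.Tendsto g Filter.atTop (nhds 0)) : Summable f := by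
  apply summable_of_ratio_norm_eventually_le (r := 1/2) (by norm_num)
  have hev := hg.eventually (Metric.ball_mem_nhds (0:ℂ) (by norm_num : (0:ℝ) < 1/2))
  filter_upwards [hev] with n hn
  simp only [Metric.mem_ball, dist_zero_right] at hn
  rw [hfg n, norm_mul, mul_comm]
  exact mul_le_mul_of_nonneg_right hn.le (norm_nonneg _)

section main
variable (w q : ℂ) (hq : ‖q‖ < 1) (hw : w ≠ 0) (hw' : ∀ ℓ : ℤ, w ≠ q ^ ℓ)

include hw' in
lemma h1 : ∀ n : ℕ, (1:ℂ) - w * q ^ n ≠ 0 := by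
  intro n h
  have hwq : q ^ n * w = 1 := by linear_combination -h
  exact hw' (-(n:ℤ)) (by rw [zpow_neg, zpow_natCast]; exact eq_inv_of_mul_eq_one_right hwq)

include hw hw' in
lemma h2 : ∀ n : ℕ, (1:ℂ) - w⁻¹ * q * q ^ n ≠ 0 := by
  intro n h
  apply hw' ((n:ℤ)+1)
  have h' : w⁻¹ * q * q ^ n = 1 := by linear_combination -h
  have : q * q ^ n = w := by
    field_simp at h'
    linear_combination h'
  rw [show ((n:ℤ)+1) = ((n+1 : ℕ) : ℤ) by push_cast; ring, zpow_natCast, pow_succ']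
  exact this.symm

include hq in
lemma h3 : ∀ n : ℕ, (1:ℂ) + q ^ n ≠ 0 := by
  intro n h
  have hqn : q ^ n = -1 := by linear_combination h
  match n with
  | 0 => simp at hqn; exact absurd hqn (by norm_num)
  | k+1 =>
    have h1 : ‖q ^ (k+1)‖ = 1 := by rw [hqn]; simp
    have h2 : ‖q ^ (k+1)‖ < 1 := by
      rw [norm_pow]
      exact pow_lt_one₀ (norm_nonneg q) hq (Nat.succ_ne_zero k)
    linarith

include hw' in
lemma hPW : ∀ n : ℕ, qPoch w q n ≠ 0 := by
  intro n
  refine Finset.prod_ne_zero_iff.mpr fun j _ => h1 w q hw' j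

include hw' in
lemma hPw : ∀ n : ℕ, qPoch (w*q) q n ≠ 0 := by
  intro n
  refine Finset.prod_ne_zero_iff.mpr fun j _ h => h1 w q hw' (j+1) ?_
  rw [pow_succ']; linear_combination h

include hw hw' in
lemma hPv : ∀ n : ℕ, qPoch (w⁻¹*q) q n ≠ 0 := by
  intro n
  refine Finset.prod_ne_zero_iff.mpr fun j _ h => h2 w q hw hw' j ?_
  linear_combination h

end main

noncomputable def uu (w q : ℂ) (n : ℕ) : ℂ :=
  q^(n*(n+1)/2) * qPoch (-q) q n * (1 - w*q^n)
    / (w*(1-w)*(1+q^n)*qPoch (w*q) q n * qPoch (w⁻¹*q) q n)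

section key
variable (w q : ℂ) (hq : ‖q‖ < 1) (hw : w ≠ 0) (hw' : ∀ ℓ : ℤ, w ≠ q ^ ℓ)

include hq hw hw' in
set_option maxHeartbeats 2000000 in
lemma key (n : ℕ) :
    qPoch (-q) q n * q ^ (n * (n + 1) / 2)
        / (qPoch w q (n + 1) * qPoch (w⁻¹ * q) q (n + 1))
      = (1 + w) / (2 * w * (1 - w))
          * (qPoch (-1) q n * q ^ (n * (n + 1) / 2)
              / (qPoch (w * q) q n * qPoch (w⁻¹ * q) q n))
        + (uu w q (n+1) - uu w q n) := by
  have h1w : (1:ℂ) - w ≠ 0 := by simpa using h1 w q hw' 0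
  have h3n := h3 q hq n
  have h3n' : (1:ℂ) + q * q ^ n ≠ 0 := by
    have := h3 q hq (n+1); rwa [pow_succ'] at this
  have hwx : (1:ℂ) - w * (q * q ^ n) ≠ 0 := by
    have := h1 w q hw' (n+1); rwa [pow_succ'] at this
  have hvx : (1:ℂ) - w⁻¹ * q * q ^ n ≠ 0 := h2 w q hw hw' n
  have hvx2 : w - q * q ^ n ≠ 0 := by
    intro h
    apply hw' (((n+1 : ℕ)) : ℤ)
    rw [zpow_natCast, pow_succ']
    linear_combination h
  have hPwn := hPw w q hw' n
  have hPvn := hPv w q hw hw' n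
  have e3 : qPoch (-1) q n = 2 * qPoch (-q) q n / (1 + q^n) := by
    rw [eq_div_iff h3n]
    have a1 : qPoch (-1) q n * (1 - (-1)*q^n) = (1 - (-1)) * qPoch ((-1)*q) q n := by
      rw [← qPoch_succ, qPoch_shift]
    rw [show ((-1:ℂ)*q) = -q by ring] at a1
    linear_combination a1
  have e6 : q^((n+1)*((n+1)+1)/2) = q^(n*(n+1)/2) * (q*q^n) := by
    rw [← pow_succ', ← pow_add]; congr 1
    have : (n+1)*(n+1+1) = n*(n+1) + 2*(n+1) := by ring
    omega
  rw [e3, qPoch_shift w q n, qPoch_succ (w⁻¹*q) q n]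
  unfold uu
  rw [e6, qPoch_succ (-q) q n, qPoch_succ (w*q) q n, qPoch_succ (w⁻¹*q) q n,
    pow_succ' q n]
  set A := qPoch (-q) q n with hA
  set Pw := qPoch (w*q) q n with hPW2
  set Pv := qPoch (w⁻¹*q) q n with hPV2
  set Q := q ^ (n*(n+1)/2) with hQ
  set x := q ^ n with hx
  clear_value A Pw Pv Q x
  have ew : (1:ℂ) - w⁻¹*q*x = (w - q*x)/w := by field_simp
  rw [ew]
  simp only [← mul_div_assoc, div_div_eq_mul_div]
  rw [← mul_assoc] at hwx
  have h2C : (2:ℂ) ≠ 0 := two_ne_zero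
  have hD1 : ((1:ℂ)-w)*Pw*(Pv*(w - q*x)) ≠ 0 :=
    mul_ne_zero (mul_ne_zero h1w hPwn) (mul_ne_zero hPvn hvx2)
  have hD2 : (2*w*((1:ℂ)-w))*(1+x)*(Pw*Pv) ≠ 0 :=
    mul_ne_zero (mul_ne_zero (mul_ne_zero (mul_ne_zero h2C hw) h1w) h3n)
      (mul_ne_zero hPwn hPvn)
  have hD3 : w*((1:ℂ)-w)*(1+q*x)*(Pw*(1-w*q*x))*(Pv*(w-q*x)) ≠ 0 :=
    mul_ne_zero (mul_ne_zero (mul_ne_zero (mul_ne_zero hw h1w) h3n')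
      (mul_ne_zero hPwn hwx)) (mul_ne_zero hPvn hvx2)
  have hD4 : w*((1:ℂ)-w)*(1+x)*Pw*Pv ≠ 0 :=
    mul_ne_zero (mul_ne_zero (mul_ne_zero (mul_ne_zero hw h1w) h3n) hPwn) hPvn
  simp only [div_mul_eq_mul_div, ← mul_div_assoc, div_div]
  rw [div_sub_div _ _ hD3 hD4, div_add_div _ _ hD2 (mul_ne_zero hD3 hD4),
    div_eq_div_iff hD1 (mul_ne_zero hD2 (mul_ne_zero hD3 hD4))]
  ring
end key

section rest
variable (w q : ℂ) (hq : ‖q‖ < 1) (hw : w ≠ 0) (hw' : ∀ ℓ : ℤ, w ≠ q ^ ℓ)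

lemma e6' (q : ℂ) (n : ℕ) : q^((n+1)*((n+1)+1)/2) = q^(n*(n+1)/2) * (q*q^n) := by
  rw [← pow_succ', ← pow_add]; congr 1
  have : (n+1)*(n+1+1) = n*(n+1) + 2*(n+1) := by ring
  omega

include hq hw hw' in
lemma ratB (n : ℕ) :
    qPoch (-1) q (n+1) * q ^ ((n+1) * ((n+1) + 1) / 2)
        / (qPoch (w * q) q (n+1) * qPoch (w⁻¹ * q) q (n+1))
      = qPoch (-1) q n * q ^ (n * (n + 1) / 2)
          / (qPoch (w * q) q n * qPoch (w⁻¹ * q) q n)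
        * ((1+q^n)*(q*q^n)/((1 - w*(q*q^n))*(1 - w⁻¹*(q*q^n)))) := by
  have hwqx : (1:ℂ) - w*q*q^n ≠ 0 := fun h => h1 w q hw' (n+1) (by rw [pow_succ']; linear_combination h)
  have hvqx : (1:ℂ) - w⁻¹*q*q^n ≠ 0 := h2 w q hw hw' n
  have hwqx' : (1:ℂ) - w*(q*q^n) ≠ 0 := by rw [← mul_assoc]; exact hwqx
  have hvqx' : (1:ℂ) - w⁻¹*(q*q^n) ≠ 0 := by rw [← mul_assoc]; exact hvqx
  have hPwn := hPw w q hw' n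
  have hPvn := hPv w q hw hw' n
  rw [qPoch_succ (-1) q n, qPoch_succ (w*q) q n, qPoch_succ (w⁻¹*q) q n, e6',
    div_mul_div_comm,
    div_eq_div_iff
      (mul_ne_zero (mul_ne_zero hPwn hwqx) (mul_ne_zero hPvn hvqx))
      (mul_ne_zero (mul_ne_zero hPwn hPvn) (mul_ne_zero hwqx' hvqx'))]
  ring

include hq hw hw' in
lemma ratU (n : ℕ) :
    uu w q (n+1)
      = uu w q n * ((1+q^n)*(q*q^n)/((1 - w*q^n)*(1 - w⁻¹*(q*q^n)))) := by
  have h1w : (1:ℂ) - w ≠ 0 := by simpa using h1 w q hw' 0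
  have hwn : (1:ℂ) - w*q^n ≠ 0 := h1 w q hw' n
  have hwqx : (1:ℂ) - w*q*q^n ≠ 0 := fun h => h1 w q hw' (n+1) (by rw [pow_succ']; linear_combination h)
  have hvqx : (1:ℂ) - w⁻¹*q*q^n ≠ 0 := h2 w q hw hw' n
  have hvqx' : (1:ℂ) - w⁻¹*(q*q^n) ≠ 0 := by rw [← mul_assoc]; exact hvqx
  have hPwn := hPw w q hw' n
  have hPvn := hPv w q hw hw' n
  have h3n := h3 q hq n
  have h3n' : (1:ℂ) + q * q ^ n ≠ 0 := by
    have := h3 q hq (n+1); rwa [pow_succ'] at this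
  unfold uu
  rw [e6', qPoch_succ (-q) q n, qPoch_succ (w*q) q n, qPoch_succ (w⁻¹*q) q n,
    pow_succ' q n, div_mul_div_comm,
    div_eq_div_iff
      (mul_ne_zero (mul_ne_zero (mul_ne_zero (mul_ne_zero hw h1w) h3n')
        (mul_ne_zero hPwn hwqx)) (mul_ne_zero hPvn hvqx))
      (mul_ne_zero (mul_ne_zero (mul_ne_zero (mul_ne_zero (mul_ne_zero hw h1w) h3n) hPwn) hPvn)
        (mul_ne_zero hwn hvqx'))]
  ring
end rest

theorem g2_eq_g22 (w q : ℂ) (hq : ‖q‖ < 1) (hw : w ≠ 0)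
    (hw' : ∀ ℓ : ℤ, w ≠ q ^ ℓ) :
    ∑' n : ℕ, qPoch (-q) q n * q ^ (n * (n + 1) / 2)
        / (qPoch w q (n + 1) * qPoch (w⁻¹ * q) q (n + 1))
      = (1 + w) / (2 * w * (1 - w))
          * ∑' n : ℕ, qPoch (-1) q n * q ^ (n * (n + 1) / 2)
              / (qPoch (w * q) q n * qPoch (w⁻¹ * q) q n)
        - 1 / (2 * w) := by
  have h1w : (1:ℂ) - w ≠ 0 := by simpa using h1 w q hw' 0
  have hq0 : Tendsto (fun n : ℕ => q ^ n) atTop (nhds 0) :=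
    tendsto_pow_atTop_nhds_zero_of_norm_lt_one hq
  -- Summability of the overpartition-rank series B
  set B : ℕ → ℂ := fun n => qPoch (-1) q n * q ^ (n * (n + 1) / 2)
      / (qPoch (w * q) q n * qPoch (w⁻¹ * q) q n) with hBdef
  set FB : ℂ → ℂ := fun x => (1+x)*(q*x)/((1 - w*(q*x))*(1 - w⁻¹*(q*x))) with hFBdef
  have hFBc : ContinuousAt FB 0 := by
    apply ContinuousAt.div (by fun_prop) (by fun_prop)
    norm_num
  have htB : Tendsto (fun n : ℕ => FB (q ^ n)) atTop (nhds 0) := by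
    have := hFBc.tendsto.comp hq0
    have hFB0 : FB 0 = 0 := by simp [hFBdef]
    rw [hFB0] at this
    exact this
  have hsB : Summable B :=
    summable_helper (fun n => ratB w q hq hw hw' n) htB
  -- Summability of the telescoping sequence U
  set U : ℕ → ℂ := fun n => uu w q n with hUdef
  set FU : ℂ → ℂ := fun x => (1+x)*(q*x)/((1 - w*x)*(1 - w⁻¹*(q*x))) with hFUdef
  have hFUc : ContinuousAt FU 0 := by
    apply ContinuousAt.div (by fun_prop) (by fun_prop)
    norm_num
  have htU : Tendsto (fun n : ℕ => FU (q ^ n)) atTop (nhds 0) := by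
    have := hFUc.tendsto.comp hq0
    have hFU0 : FU 0 = 0 := by simp [hFUdef]
    rw [hFU0] at this
    exact this
  have hsU : Summable U :=
    summable_helper (fun n => ratU w q hq hw hw' n) htU
  have htU0 : Tendsto U atTop (nhds 0) := hsU.tendsto_atTop_zero
  have hsU1 : Summable (fun n => U (n+1)) := (summable_nat_add_iff 1).mpr hsU
  have hsD : Summable (fun n => U (n+1) - U n) := hsU1.sub hsU
  -- telescoping value
  have htel : ∑' n : ℕ, (U (n+1) - U n) = -U 0 := by
    have t1 := hsD.hasSum.tendsto_sum_nat
    have t2 : (fun N => ∑ i ∈ Finset.range N, (U (i+1) - U i)) = fun N => U N - U 0 := by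
      funext N; exact Finset.sum_range_sub U N
    rw [t2] at t1
    have t3 : Tendsto (fun N => U N - U 0) atTop (nhds (0 - U 0)) :=
      htU0.sub_const (U 0)
    have := tendsto_nhds_unique t1 t3
    rw [this]; ring
  have hU0 : U 0 = 1/(2*w) := by
    show uu w q 0 = 1/(2*w)
    unfold uu qPoch
    simp only [Nat.zero_eq, Finset.range_zero, Finset.prod_empty, pow_zero, mul_one, one_mul]
    rw [show (0*(0+1)/2) = 0 from rfl, pow_zero, one_mul,
      div_eq_div_iff (mul_ne_zero (mul_ne_zero hw h1w) (by norm_num))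
        (mul_ne_zero two_ne_zero hw)]
    ring
  calc ∑' n : ℕ, qPoch (-q) q n * q ^ (n * (n + 1) / 2)
        / (qPoch w q (n + 1) * qPoch (w⁻¹ * q) q (n + 1))
      = ∑' n : ℕ, ((1 + w) / (2 * w * (1 - w)) * B n + (U (n+1) - U n)) :=
        tsum_congr (fun n => key w q hq hw hw' n)
    _ = (∑' n : ℕ, (1 + w) / (2 * w * (1 - w)) * B n) + ∑' n : ℕ, (U (n+1) - U n) :=
        Summable.tsum_add (hsB.mul_left _) hsD
    _ = (1 + w) / (2 * w * (1 - w)) * (∑' n : ℕ, B n) + -U 0 := by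
        rw [tsum_mul_left, htel]
    _ = (1 + w) / (2 * w * (1 - w)) * (∑' n : ℕ, B n) - 1/(2*w) := by
        rw [hU0]; ring
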